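/- arXiv:2412.09546 — 3 statements merged into one kernel-verified Lean document; each statement's English description precedes it below -/
import Mathlib

section
/- Let p be a complex polynomial of degree at most n-1. If p maps 2n distinct points of the unit circle into the real line, then p is a real constant. -/
/-!
On the unit circle `conj w = w⁻¹`, so for `deg p ≤ N = n - 1` the polynomial `q = reflect N (map conj p)`
satisfies `q(w) = w ^ N * conj (p w)`. At the `2n > 2N` points where `p` is real, `X ^ N * p - q`
(of degree `≤ 2N`) vanishes, hence `X ^ N * p = q`. Comparing degrees forces `p` to be a constant,
and comparing the coefficients of `X ^ N` shows that this constant equals its conjugate.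
-/

open Polynomial Complex
open ComplexConjugate

theorem eval_reflect_map_conj_of_norm_eq_one {N : ℕ} {f : ℂ[X]} (hf : f.natDegree ≤ N) {w : ℂ}
    (hw : ‖w‖ = 1) : (reflect N (f.map (starRingEnd ℂ))).eval w = w ^ N * conj (f.eval w) := by
  have hw0 : w ≠ 0 := by rintro rfl; simp at hw
  let := invertibleOfNonzero (inv_ne_zero hw0)
  have key := eval₂_reflect_mul_pow (RingHom.id ℂ) w⁻¹ N (f.map (starRingEnd ℂ))
    (natDegree_map_le.trans hf)
  rw [invOf_eq_inv, inv_inv, ← eval, ← eval, eval_map, inv_eq_conj hw, eval₂_at_apply,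
    ← inv_eq_conj hw] at key
  rw [← key, mul_left_comm, ← mul_pow, mul_inv_cancel₀ hw0, one_pow, mul_one]

theorem X_pow_mul_eq_reflect_map_conj {N : ℕ} {f : ℂ[X]} (hf : f.natDegree ≤ N) {ι : Type*}
    [Fintype ι] {z : ι → ℂ} (hz : Function.Injective z) (hcard : 2 * N < Fintype.card ι)
    (hcirc : ∀ i, ‖z i‖ = 1) (hreal : ∀ i, (f.eval (z i)).im = 0) :
    X ^ N * f = reflect N (f.map (starRingEnd ℂ)) := by
  refine sub_eq_zero.mp (eq_zero_of_natDegree_lt_card_of_eval_eq_zero _ hz (fun i => ?_) ?_)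
  · rw [eval_sub, eval_mul, eval_X_pow, eval_reflect_map_conj_of_norm_eq_one hf (hcirc i),
      conj_eq_iff_im.mpr (hreal i), sub_self]
  · calc (X ^ N * f - reflect N (f.map (starRingEnd ℂ))).natDegree
        ≤ max (N + N) (max N (f.map (starRingEnd ℂ)).natDegree) :=
          (natDegree_sub_le _ _).trans <| max_le_max
            (natDegree_mul_le.trans (add_le_add (natDegree_X_pow_le N) hf)) natDegree_reflect_le
      _ < Fintype.card ι := by
          have := (natDegree_map_le (f := starRingEnd ℂ) (p := f)).trans hf
          omega

theorem exists_real_eq_C_of_X_pow_mul_eq_reflect_map_conj {N : ℕ} {f : ℂ[X]}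
    (hf : f.natDegree ≤ N) (h : X ^ N * f = reflect N (f.map (starRingEnd ℂ))) :
    ∃ c : ℝ, f = C (c : ℂ) := by
  obtain rfl | hf0 := eq_or_ne f 0
  · exact ⟨0, by simp⟩
  have hdeg : f.natDegree = 0 := by
    have hle : (X ^ N * f).natDegree ≤ N := by
      rw [h]
      exact natDegree_reflect_le.trans (max_le le_rfl (natDegree_map_le.trans hf))
    rw [natDegree_X_pow_mul (n := N) hf0] at hle
    omega
  rw [eq_C_of_natDegree_eq_zero hdeg] at h ⊢
  rw [Polynomial.map_C, reflect_C, mul_comm, mul_left_inj' (pow_ne_zero N X_ne_zero), C_inj] at h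
  exact ⟨_, congrArg C (conj_eq_iff_re.mp h.symm).symm⟩

theorem stmt0 (n : ℕ) (hn : 1 ≤ n) (p : ℂ[X]) (hdeg : p.degree ≤ ((n - 1 : ℕ) : WithBot ℕ))
    (z : Fin (2 * n) → ℂ) (hinj : Function.Injective z)
    (hcirc : ∀ i, ‖z i‖ = 1)
    (hreal : ∀ i, (p.eval (z i)).im = 0) :
    ∃ c : ℝ, p = Polynomial.C (c : ℂ) := by
  have hp : p.natDegree ≤ n - 1 := natDegree_le_iff_degree_le.mpr hdeg
  have hcard : 2 * (n - 1) < Fintype.card (Fin (2 * n)) := by rw [Fintype.card_fin]; omega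
  exact exists_real_eq_C_of_X_pow_mul_eq_reflect_map_conj hp
    (X_pow_mul_eq_reflect_map_conj hp hinj hcard hcirc hreal)
end

section
/- Let α₁,β₁,…,αₙ,βₙ be distinct points on the unit circle appearing in this cyclic order, and let F = ev_β ∘ ev_α⁻¹ : ℂⁿ → ℂⁿ. Then F(ℝⁿ) ∩ ℝⁿ is the real line spanned by the all-ones vector (1,…,1). -/
/-!
Let `p` interpolate a real vector at the nodes `α`, so `deg p < n` and `F` sends that vector to
the values of `p` at `β`. If both vectors are real, then `p` is real at all `2n` nodes. On the unit
circle `conj z = z⁻¹`, so `z ^ (n - 1) * conj (p z)` is a polynomial `q z` of degree `≤ n - 1`.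
Then `X ^ (n - 1) * p - q` has degree `≤ 2n - 2` and vanishes at all `2n` nodes, so
`X ^ (n - 1) * p = q`. Comparing degrees shows that `p` is constant.
-/

open Polynomial Complex ComplexConjugate

def Interleaved {n : ℕ} (t s : Fin n → ℝ) : Prop :=
  (∀ j : Fin n, t j < s j) ∧
    ∀ j : Fin n, ∀ h : (j : ℕ) + 1 < n, s j < t ⟨(j : ℕ) + 1, h⟩

namespace Interleaved

variable {n : ℕ} {t s : Fin n → ℝ}

theorem lt {i j : Fin n} (h : Interleaved t s) (hij : i < j) : s i < t j := by
  obtain ⟨j, hj⟩ := j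
  induction j with
  | zero => exact absurd hij (Nat.not_lt_zero _)
  | succ j ih =>
    rcases (Nat.lt_succ_iff.mp hij).eq_or_lt with hi | hi
    · simpa [← hi] using h.2 i (hi ▸ hj)
    · exact (ih (by omega) hi).trans ((h.1 _).trans (h.2 ⟨j, by omega⟩ hj))

theorem strictMono_left (h : Interleaved t s) : StrictMono t :=
  fun _ _ hij => (h.1 _).trans (h.lt hij)

theorem strictMono_right (h : Interleaved t s) : StrictMono s :=
  fun _ _ hij => (h.lt hij).trans (h.1 _)

theorem lt_of_le {i j : Fin n} (h : Interleaved t s) (hij : i ≤ j) : t i < s j :=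
  (h.strictMono_left.monotone hij).trans_lt (h.1 j)

theorem ne (h : Interleaved t s) (i j : Fin n) : t i ≠ s j := by
  rcases le_or_gt i j with hij | hij
  · exact (h.lt_of_le hij).ne
  · exact (h.lt hij).ne'

theorem injective_sumElim (h : Interleaved t s) : Function.Injective (Sum.elim t s) := by
  rintro (i | i) (j | j) hij
  · exact congrArg _ (h.strictMono_left.injective hij)
  · exact absurd hij (h.ne i j)
  · exact absurd hij.symm (h.ne j i)
  · exact congrArg _ (h.strictMono_right.injective hij)

theorem sumElim_mem_Icc (h : Interleaved t s) (hn : 0 < n) (x : Fin n ⊕ Fin n) :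
    Sum.elim t s x ∈ Set.Icc (t ⟨0, hn⟩) (s ⟨n - 1, Nat.sub_lt hn one_pos⟩) := by
  have hfirst : ∀ j : Fin n, ⟨0, hn⟩ ≤ j := fun j => Nat.zero_le j
  have hlast : ∀ j : Fin n, j ≤ ⟨n - 1, Nat.sub_lt hn one_pos⟩ :=
    fun j => Nat.le_sub_one_of_lt j.2
  rcases x with j | j
  · exact ⟨h.strictMono_left.monotone (hfirst j), (h.lt_of_le (hlast j)).le⟩
  · exact ⟨(h.lt_of_le (hfirst j)).le, h.strictMono_right.monotone (hlast j)⟩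

theorem injective_exp_sumElim (h : Interleaved t s) (hn : 0 < n)
    (hspan : s ⟨n - 1, Nat.sub_lt hn one_pos⟩ < t ⟨0, hn⟩ + 2 * Real.pi) :
    Function.Injective fun x => Complex.exp (Sum.elim t s x * I) := by
  have hmem : ∀ x, Sum.elim t s x ∈ Set.Ico (t ⟨0, hn⟩) (t ⟨0, hn⟩ + 2 * Real.pi) :=
    fun x => ⟨(h.sumElim_mem_Icc hn x).1, (h.sumElim_mem_Icc hn x).2.trans_lt hspan⟩
  exact fun x y hxy => h.injective_sumElim <|
    Circle.exp_injOn_Ico (add_sub_cancel_left _ _).le (hmem x) (hmem y) (Subtype.ext hxy)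

end Interleaved

theorem Lagrange.exists_degree_lt_card_eval_eq {ι K : Type*} [Fintype ι] [Field K] {α : ι → K}
    (hα : Function.Injective α) (v : ι → K) :
    ∃ p : K[X], p.degree < Fintype.card ι ∧ ∀ i, p.eval (α i) = v i := by
  classical
  exact ⟨interpolate Finset.univ α v, degree_interpolate_lt v hα.injOn,
    fun i => eval_interpolate_at_node v hα.injOn (Finset.mem_univ i)⟩

namespace Polynomial

theorem natDegree_le_sub_one_of_degree_lt {R : Type*} [Semiring R] {p : R[X]} {n : ℕ}
    (h : p.degree < n) : p.natDegree ≤ n - 1 :=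
  natDegree_le_iff_coeff_eq_zero.mpr fun m hm =>
    (degree_lt_iff_coeff_zero _ _).mp h m (by omega)

theorem eval_map_conj_reflect {N : ℕ} {p : ℂ[X]} (hp : p.natDegree ≤ N) {z : ℂ}
    (hz : ‖z‖ = 1) :
    ((p.reflect N).map (starRingEnd ℂ)).eval z = z ^ N * conj (p.eval z) := by
  have hz0 : z ≠ 0 := norm_ne_zero_iff.mp (by rw [hz]; exact one_ne_zero)
  let := invertibleOfNonzero (inv_ne_zero hz0)
  have h := eval₂_reflect_mul_pow (starRingEnd ℂ) z⁻¹ N p hp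
  rw [invOf_eq_inv, inv_inv, inv_eq_conj hz, eval₂_at_apply, ← inv_eq_conj hz] at h
  rw [eval_map, ← h, inv_pow, ← div_eq_mul_inv, mul_div_cancel₀ _ (pow_ne_zero N hz0)]

theorem exists_eq_C_ofReal_of_im_eval_eq_zero {ι : Type*} [Fintype ι] {N : ℕ} {p : ℂ[X]}
    (hp : p.natDegree ≤ N) {z : ι → ℂ} (hz : Function.Injective z)
    (hcard : 2 * N < Fintype.card ι) (hnorm : ∀ i, ‖z i‖ = 1)
    (hreal : ∀ i, (p.eval (z i)).im = 0) : ∃ c : ℝ, p = C (c : ℂ) := by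
  set q := (p.reflect N).map (starRingEnd ℂ)
  have hq : q.natDegree ≤ N :=
    natDegree_map_le.trans (natDegree_reflect_le.trans (max_le le_rfl hp))
  have hroots : ∀ i, (X ^ N * p - q).eval (z i) = 0 := fun i => by
    rw [eval_sub, eval_mul, eval_pow, eval_X, eval_map_conj_reflect hp (hnorm i),
      conj_eq_iff_im.mpr (hreal i), sub_self]
  have hdeg : (X ^ N * p - q).natDegree < Fintype.card ι := by
    refine (natDegree_sub_le _ _).trans_lt (max_lt ?_ (by omega))
    exact (natDegree_mul_le.trans (by rw [natDegree_X_pow]; omega)).trans_lt hcard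
  have hXp : X ^ N * p = q :=
    sub_eq_zero.mp (eq_zero_of_natDegree_lt_card_of_eval_eq_zero _ hz hroots hdeg)
  have hp0 : p.natDegree = 0 := by
    rcases eq_or_ne p 0 with rfl | hne
    · rfl
    · have := natDegree_X_pow_mul (n := N) hne
      rw [hXp] at this
      omega
  obtain ⟨i⟩ : Nonempty ι := Fintype.card_pos_iff.mp (by omega)
  refine ⟨(p.coeff 0).re, ?_⟩
  rw [eq_C_of_natDegree_eq_zero hp0] at hreal ⊢
  simpa [Complex.ext_iff] using hreal i

end Polynomial

theorem stmt5_general (n : ℕ) (hn : 0 < n) (t s : Fin n → ℝ)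
    (h1 : ∀ j : Fin n, t j < s j)
    (h2 : ∀ j : Fin n, ∀ h : (j : ℕ) + 1 < n, s j < t ⟨(j : ℕ) + 1, h⟩)
    (h3 : s ⟨n - 1, Nat.sub_lt hn one_pos⟩ < t ⟨0, hn⟩ + 2 * Real.pi)
    (α β : Fin n → ℂ)
    (hαdef : ∀ j, α j = Complex.exp ((t j : ℂ) * Complex.I))
    (hβdef : ∀ j, β j = Complex.exp ((s j : ℂ) * Complex.I))
    (F : (Fin n → ℂ) →ₗ[ℂ] (Fin n → ℂ))
    (hF : ∀ q : ℂ[X], q.degree < (n : ℕ) →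
      F (fun i => q.eval (α i)) = fun i => q.eval (β i)) :
    (⇑F '' {w : Fin n → ℂ | ∀ i, (w i).im = 0}) ∩ {w : Fin n → ℂ | ∀ i, (w i).im = 0}
      = {w : Fin n → ℂ | ∃ c : ℝ, ∀ i, w i = (c : ℂ)} := by
  have hnodes : Sum.elim α β = fun x => Complex.exp (Sum.elim t s x * I) := by
    ext (j | j) <;> simp [hαdef, hβdef]
  have hinj : Function.Injective (Sum.elim α β) :=
    hnodes ▸ Interleaved.injective_exp_sumElim ⟨h1, h2⟩ hn h3
  have hnorm : ∀ x, ‖Sum.elim α β x‖ = 1 := fun x => by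
    rw [hnodes]
    exact norm_exp_ofReal_mul_I _
  ext w
  constructor
  · rintro ⟨⟨v, hv, rfl⟩, hw⟩
    obtain ⟨p, hpdeg, hpα⟩ :=
      Lagrange.exists_degree_lt_card_eval_eq (α := α) (hinj.comp Sum.inl_injective) v
    rw [Fintype.card_fin] at hpdeg
    have hFv : F v = fun i => p.eval (β i) := by
      rw [← hF p hpdeg, funext hpα]
    obtain ⟨c, hc⟩ := exists_eq_C_ofReal_of_im_eval_eq_zero
      (natDegree_le_sub_one_of_degree_lt hpdeg) hinj
      (by rw [Fintype.card_sum, Fintype.card_fin]; omega) hnorm (by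
        rintro (j | j)
        · simpa [hpα] using hv j
        · simpa [hFv] using hw j)
    exact ⟨c, fun i => by simp [hFv, hc]⟩
  · rintro ⟨c, hc⟩
    have hconst : F (fun _ => (c : ℂ)) = fun _ => (c : ℂ) := by
      simpa using hF (C (c : ℂ)) (degree_C_le.trans_lt (by exact_mod_cast hn))
    rw [funext hc, ← hconst]
    exact ⟨⟨_, fun _ => ofReal_im c, rfl⟩, by simp [hconst]⟩

theorem stmt5 (n : ℕ) (hn : 0 < n) (t s : Fin n → ℝ)
    (h1 : ∀ j : Fin n, t j < s j)
    (h2 : ∀ j : Fin n, ∀ h : (j : ℕ) + 1 < n, s j < t ⟨(j : ℕ) + 1, h⟩)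
    (h3 : s ⟨n - 1, Nat.sub_lt hn one_pos⟩ < t ⟨0, hn⟩ + 2 * Real.pi)
    (α β : Fin n → ℂ)
    (hαdef : ∀ j, α j = Complex.exp ((t j : ℂ) * Complex.I))
    (hβdef : ∀ j, β j = Complex.exp ((s j : ℂ) * Complex.I))
    (F : (Fin n → ℂ) →ₗ[ℂ] (Fin n → ℂ))
    (hF : ∀ q : ℂ[X], q.degree < (n : ℕ) →
      F (fun i => q.eval (α i)) = fun i => q.eval (β i))
    (hFinj : Function.Injective F) :
    (⇑F '' {w : Fin n → ℂ | ∀ i, (w i).im = 0}) ∩ {w : Fin n → ℂ | ∀ i, (w i).im = 0}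
      = {w : Fin n → ℂ | ∃ c : ℝ, ∀ i, w i = (c : ℂ)} :=
  stmt5_general n hn t s h1 h2 h3 α β hαdef hβdef F hF
end

section
/- Let α, β be n-tuples of distinct complex numbers and F = ev_β ∘ ev_α⁻¹. Suppose a complex number λ and polynomial p of degree < n satisfy ev_α(p) ∈ ℝⁿ and ev_β(p) ∈ ℝⁿ, where all 2n points α₁,…,αₙ,β₁,…,βₙ are distinct and lie on the unit circle. Then p is a real constant, and hence ev_α(p) = ev_β(p) = λ·(1,…,1) for some λ ∈ ℝ. -/
/-!
Write `N = natDegree p` and `p* = reflect N (map conj p)`. On the unit circle `conj z = z⁻¹`, so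
`p*(z) = z ^ N * conj (p z)`, and `X ^ N * p - p*` vanishes wherever `p` is real there. That
difference has degree at most `2 * N < 2 * n`, so the `2 * n` distinct points force
`X ^ N * p = p*`. The left side has degree `2 * N` and the right at most `N`, hence `N = 0`, and
the constant coefficient equals its own conjugate.
-/

open Polynomial Complex ComplexConjugate

namespace Polynomial

lemma eval_reflect_map_conj {p : ℂ[X]} {N : ℕ} (hN : p.natDegree ≤ N) {z : ℂ} (hz : ‖z‖ = 1) :
    (reflect N (p.map (starRingEnd ℂ))).eval z = z ^ N * conj (p.eval z) := by
  have hz0 : z ≠ 0 := norm_ne_zero_iff.mp (hz ▸ one_ne_zero)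
  let : Invertible z⁻¹ := invertibleOfNonzero (inv_ne_zero hz0)
  have h := eval₂_reflect_mul_pow (RingHom.id ℂ) z⁻¹ N (p.map (starRingEnd ℂ))
    (natDegree_map_le.trans hN)
  rw [invOf_eq_inv, inv_inv, eval₂_id, eval₂_id, inv_eq_conj hz, eval_map_apply] at h
  rw [← h, mul_left_comm, ← mul_pow, ← inv_eq_conj hz, mul_inv_cancel₀ hz0, one_pow, mul_one]

lemma X_pow_mul_eq_reflect_map_conj {ι : Type*} [Fintype ι] {p : ℂ[X]} {f : ι → ℂ}
    (hf : Function.Injective f) (hunit : ∀ i, ‖f i‖ = 1) (hreal : ∀ i, (p.eval (f i)).im = 0)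
    (hcard : 2 * p.natDegree < Fintype.card ι) :
    X ^ p.natDegree * p = reflect p.natDegree (p.map (starRingEnd ℂ)) := by
  rw [← sub_eq_zero]
  refine eq_zero_of_natDegree_lt_card_of_eval_eq_zero _ hf (fun i ↦ ?_) ?_
  · rw [eval_sub, eval_mul, eval_pow, eval_X, eval_reflect_map_conj le_rfl (hunit i),
      conj_eq_iff_im.mpr (hreal i), sub_self]
  · refine (natDegree_sub_le _ _).trans_lt (max_lt ?_ ?_)
    · exact natDegree_mul_le.trans_lt (by grind [natDegree_X_pow_le])
    · refine natDegree_reflect_le.trans_lt (max_lt (by omega) ?_)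
      exact natDegree_map_le.trans_lt (by omega)

lemma eq_C_re_coeff_zero_of_X_pow_mul_eq_reflect_map_conj {p : ℂ[X]}
    (h : X ^ p.natDegree * p = reflect p.natDegree (p.map (starRingEnd ℂ))) :
    p = C ((p.coeff 0).re : ℂ) := by
  rcases eq_or_ne p 0 with rfl | hp
  · simp
  have hdeg : p.natDegree = 0 := by
    have := congrArg natDegree h
    rw [natDegree_X_pow_mul (n := p.natDegree) hp] at this
    have := this.trans_le (natDegree_reflect_le.trans (max_le le_rfl natDegree_map_le))
    omega
  have hconj : conj (p.coeff 0) = p.coeff 0 := by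
    simpa [hdeg, coeff_reflect] using (congrArg (coeff · 0) h).symm
  rw [conj_eq_iff_re.mp hconj]
  exact eq_C_of_natDegree_eq_zero hdeg

end Polynomial

theorem stmt18 (n : ℕ) (hn : 0 < n) (α β : Fin n → ℂ)
    (hαinj : Function.Injective α) (hβinj : Function.Injective β)
    (hdisj : ∀ i j, α i ≠ β j)
    (hαc : ∀ i, ‖α i‖ = 1) (hβc : ∀ i, ‖β i‖ = 1)
    (p : ℂ[X]) (hp : p.degree < (n : ℕ))
    (hra : ∀ i, (p.eval (α i)).im = 0) (hrb : ∀ i, (p.eval (β i)).im = 0) :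
    ∃ lam : ℝ, p = Polynomial.C ((lam : ℂ)) ∧
      (∀ i, p.eval (α i) = (lam : ℂ)) ∧ ∀ i, p.eval (β i) = (lam : ℂ) := by
  have hdeg : p.natDegree < n := by
    rcases eq_or_ne p 0 with rfl | hp0
    · exact hn
    · exact (natDegree_lt_iff_degree_lt hp0).mpr hp
  obtain ⟨lam, rfl⟩ : ∃ lam : ℝ, p = C (lam : ℂ) :=
    ⟨_, eq_C_re_coeff_zero_of_X_pow_mul_eq_reflect_map_conj <|
      X_pow_mul_eq_reflect_map_conj (hαinj.sumElim hβinj hdisj)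
        (Sum.rec hαc hβc) (Sum.rec hra hrb)
        (by simp only [Fintype.card_sum, Fintype.card_fin]; omega)⟩
  exact ⟨lam, rfl, fun _ ↦ eval_C, fun _ ↦ eval_C⟩
end
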